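/- If there exist (i) a resolvable decomposition of the complete u-partite graph with parts of size g into parallel classes of K_4's (a 4-RGDD of type g^u, having t = g(u-1)/3 parallel classes), (ii) decompositions of 2K_4 into 3 parallel classes of 4-cycles and into 4 parallel classes of 3-stars, and (iii) a decomposition of 2K_g into r_2 parallel classes of 4-cycles and s_2 parallel classes of 3-stars, then for every choice of nonnegative integers partitioning the t classes, there is a decomposition of 2K_{gu} into r_2 + 3x parallel classes of 4-cycles and s_2 + 4(t-x) parallel classes of 3-stars, for each x with 0 ≤ x ≤ t. -/

import Mathlib

open Finset

/-- A block on four (named) vertices, used both for 4-cycles and 3-stars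
(for a 3-star, `a` is the center). -/
structure Blk (V : Type) where
  a : V
  b : V
  c : V
  d : V

variable {V : Type} [DecidableEq V] [Fintype V]

/-- The vertex set of a block. -/
def Blk.verts (B : Blk V) : Finset V := {B.a, B.b, B.c, B.d}

/-- The edge multiset of the 4-cycle (a,b,c,d). -/
def Blk.cycEdges (B : Blk V) : Multiset (Sym2 V) :=
  {s(B.a, B.b), s(B.b, B.c), s(B.c, B.d), s(B.d, B.a)}

/-- The edge multiset of the 3-star with center `a` and leaves `b,c,d`. -/
def Blk.stEdges (B : Blk V) : Multiset (Sym2 V) :=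
  {s(B.a, B.b), s(B.a, B.c), s(B.a, B.d)}

/-- A parallel class: blocks have 4 distinct vertices each, and every vertex
of `V` lies in exactly one block of the class. -/
def IsParallel (L : List (Blk V)) : Prop :=
  (∀ B ∈ L, B.verts.card = 4) ∧
  ∀ v : V, L.countP (fun B => decide (v ∈ B.verts)) = 1

/-- All edges of a class of 4-cycles. -/
def classCyc (L : List (Blk V)) : Multiset (Sym2 V) := (L.map Blk.cycEdges).sum

/-- All edges of a class of 3-stars. -/
def classSt (L : List (Blk V)) : Multiset (Sym2 V) := (L.map Blk.stEdges).sum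

/-- The edge multiset of the complete multigraph `2K_v`: every unordered pair of
distinct vertices with multiplicity 2. -/
def doubleK (v : ℕ) : Multiset (Sym2 (Fin v)) :=
  2 • ((univ : Finset (Sym2 (Fin v))).filter (fun e => ¬ e.IsDiag)).val

/-- A `(C₄, K_{1,3})`-URD`(v,2;r,s)`: a partition of the edge multiset of `2K_v`
into `r` parallel classes of 4-cycles and `s` parallel classes of 3-stars. -/
def URD (v r s : ℕ) : Prop :=
  ∃ Cs Ss : List (List (Blk (Fin v))),
    Cs.length = r ∧ Ss.length = s ∧
    (∀ L ∈ Cs, IsParallel L) ∧ (∀ L ∈ Ss, IsParallel L) ∧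
    (Cs.map classCyc).sum + (Ss.map classSt).sum = doubleK v

/-- The six edges of a complete graph `K_4` on the four vertices of a block. -/
def Blk.k4Edges (B : Blk V) : Multiset (Sym2 V) :=
  {s(B.a, B.b), s(B.a, B.c), s(B.a, B.d), s(B.b, B.c), s(B.b, B.d), s(B.c, B.d)}

/-- The edge multiset of the complete multipartite graph with `u` parts of
size `g` (multiplicity 1). -/
def mpEdges (u g : ℕ) : Multiset (Sym2 (Fin u × Fin g)) :=
  ((univ : Finset (Sym2 (Fin u × Fin g))).filter
      (fun e => ¬ (e.map Prod.fst).IsDiag)).val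

/-- A resolvable 4-GDD of type `g^u` with `t` parallel classes of `K_4`'s. -/
def IsRGDD (u g t : ℕ) : Prop :=
  ∃ Cs : List (List (Blk (Fin u × Fin g))),
    Cs.length = t ∧ (∀ L ∈ Cs, IsParallel L) ∧
    (Cs.map (fun L => (L.map Blk.k4Edges).sum)).sum = mpEdges u g

/-! The edges of `2K_{gu}` on `Fin u × Fin g` are the doubled edges of the complete multipartite
graph, each covered twice by the blocks of the RGDD, together with a copy of `2K_g` on every group.
Replacing every doubled `K_4` of one RGDD class by the three cycle classes (or the four star
classes) of `2K_4`, transported onto the block, yields three cycle (or four star) parallel classes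
of the whole vertex set; likewise each class of the `2K_g` decomposition, copied onto all groups
at once, is a parallel class. Use cycles on `x` of the RGDD classes and stars on the other
`t - x`. -/

namespace Blk

variable {α β : Type}

def map (f : β → α) (B : Blk β) : Blk α := ⟨f B.a, f B.b, f B.c, f B.d⟩

lemma verts_map [DecidableEq α] [DecidableEq β] (f : β → α) (B : Blk β) :
    (B.map f).verts = B.verts.image f := by
  simp [map, verts, image_insert]

lemma cycEdges_map (f : β → α) (B : Blk β) :
    (B.map f).cycEdges = B.cycEdges.map (Sym2.map f) := by
  simp [map, cycEdges]

lemma stEdges_map (f : β → α) (B : Blk β) :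
    (B.map f).stEdges = B.stEdges.map (Sym2.map f) := by
  simp [map, stEdges]

def vertex (B : Blk α) : Fin 4 → α := ![B.a, B.b, B.c, B.d]

lemma image_vertex [DecidableEq α] (B : Blk α) : univ.image B.vertex = B.verts := by
  simp [vertex, verts, Fin.univ_succ, image_insert]

lemma vertex_injective [DecidableEq α] {B : Blk α} (hB : B.verts.card = 4) :
    Function.Injective B.vertex := by
  have := injOn_of_card_image_eq (s := univ) (f := B.vertex) (by rw [image_vertex, hB]; rfl)
  simpa using this

lemma map_vertex_doubleK (B : Blk α) : (doubleK 4).map (Sym2.map B.vertex) = 2 • B.k4Edges := by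
  rw [doubleK, Multiset.map_nsmul]
  rfl

end Blk

section Classes

variable {α β ι : Type}

lemma classCyc_map (f : β → α) (L : List (Blk β)) :
    classCyc (L.map (Blk.map f)) = (classCyc L).map (Sym2.map f) := by
  simp only [classCyc, ← Multiset.coe_mapAddMonoidHom, map_list_sum, List.map_map]
  simp [Function.comp_def, Blk.cycEdges_map]

lemma classSt_map (f : β → α) (L : List (Blk β)) :
    classSt (L.map (Blk.map f)) = (classSt L).map (Sym2.map f) := by
  simp only [classSt, ← Multiset.coe_mapAddMonoidHom, map_list_sum, List.map_map]
  simp [Function.comp_def, Blk.stEdges_map]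

def spread (f : ι → β → α) (J : List ι) (K : List (Blk β)) : List (Blk α) :=
  J.flatMap fun j => K.map (Blk.map (f j))

lemma classCyc_spread (f : ι → β → α) (J : List ι) (K : List (Blk β)) :
    classCyc (spread f J K) = (J.map fun j => (classCyc K).map (Sym2.map (f j))).sum := by
  induction J with
  | nil => rfl
  | cons j J ih =>
    rw [List.map_cons, List.sum_cons, ← ih, ← classCyc_map]
    simp [spread, classCyc]

lemma classSt_spread (f : ι → β → α) (J : List ι) (K : List (Blk β)) :
    classSt (spread f J K) = (J.map fun j => (classSt K).map (Sym2.map (f j))).sum := by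
  induction J with
  | nil => rfl
  | cons j J ih =>
    rw [List.map_cons, List.sum_cons, ← ih, ← classSt_map]
    simp [spread, classSt]

lemma countP_mem_verts_map [DecidableEq α] [DecidableEq β] [Fintype β] {f : β → α}
    (hf : Function.Injective f) {K : List (Blk β)} (hK : IsParallel K) (v : α) :
    (K.map (Blk.map f)).countP (fun B => v ∈ B.verts) = if v ∈ univ.image f then 1 else 0 := by
  rw [List.countP_map]
  split_ifs with hv
  · obtain ⟨w, -, rfl⟩ := mem_image.mp hv
    rw [← hK.2 w]
    exact List.countP_congr fun B _ => by simp [Blk.verts_map, hf.eq_iff]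
  · refine List.countP_eq_zero.mpr fun B _ => ?_
    simp_all [Blk.verts_map]

lemma isParallel_spread [DecidableEq α] [Fintype α] [DecidableEq β] [Fintype β]
    {f : ι → β → α} {J : List ι} {K : List (Blk β)} (hK : IsParallel K)
    (hf : ∀ j ∈ J, Function.Injective (f j))
    (hJ : ∀ v, J.countP (fun j => v ∈ univ.image (f j)) = 1) :
    IsParallel (spread f J K) := by
  constructor
  · intro B hB
    obtain ⟨j, hj, hB⟩ := List.mem_flatMap.mp hB
    obtain ⟨B, hBK, rfl⟩ := List.mem_map.mp hB
    rw [Blk.verts_map, card_image_of_injective _ (hf j hj), hK.1 B hBK]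
  · intro v
    rw [← hJ v, spread, List.countP_flatMap]
    clear hJ
    induction J with
    | nil => rfl
    | cons j J ih =>
      simp only [List.map_cons, List.sum_cons, List.countP_cons, Function.comp_apply]
      rw [countP_mem_verts_map (hf j List.mem_cons_self) hK,
        ih fun i hi => hf i (List.mem_cons_of_mem j hi)]
      simp [add_comm]

end Classes

lemma List.sum_map_sum_map {γ ι M : Type} [AddCommMonoid M] (l : List γ) (J : List ι)
    (F : γ → ι → M) :
    (l.map fun c => (J.map (F c)).sum).sum = (J.map fun j => (l.map (F · j)).sum).sum := by
  induction l with
  | nil => simp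
  | cons c l ih => simp [List.sum_map_add, ih]

/-- `URD v r s` is `IsResolution (doubleK v) r s` by definition. -/
def IsResolution {α : Type} [DecidableEq α] [Fintype α] (E : Multiset (Sym2 α)) (r s : ℕ) :
    Prop :=
  ∃ Cs Ss : List (List (Blk α)),
    Cs.length = r ∧ Ss.length = s ∧
    (∀ L ∈ Cs, IsParallel L) ∧ (∀ L ∈ Ss, IsParallel L) ∧
    (Cs.map classCyc).sum + (Ss.map classSt).sum = E

namespace IsResolution

variable {α β ι γ : Type} [DecidableEq α] [Fintype α] [DecidableEq β] [Fintype β]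

lemma zero : IsResolution (0 : Multiset (Sym2 α)) 0 0 :=
  ⟨[], [], rfl, rfl, by simp, by simp, rfl⟩

lemma add {E E' : Multiset (Sym2 α)} {r s r' s' : ℕ} (h : IsResolution E r s)
    (h' : IsResolution E' r' s') : IsResolution (E + E') (r + r') (s + s') := by
  obtain ⟨Cs, Ss, rfl, rfl, hC, hS, rfl⟩ := h
  obtain ⟨Cs', Ss', rfl, rfl, hC', hS', rfl⟩ := h'
  refine ⟨Cs ++ Cs', Ss ++ Ss', by simp, by simp, ?_, ?_, ?_⟩
  · simpa using fun L hL => hL.elim (hC L) (hC' L)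
  · simpa using fun L hL => hL.elim (hS L) (hS' L)
  · simp only [List.map_append, List.sum_append]
    abel

lemma list_sum {l : List γ} {E : γ → Multiset (Sym2 α)} {r s : ℕ}
    (h : ∀ c ∈ l, IsResolution (E c) r s) :
    IsResolution (l.map E).sum (l.length * r) (l.length * s) := by
  induction l with
  | nil => simpa using zero
  | cons c l ih =>
    simpa [add_mul, add_comm] using (h c List.mem_cons_self).add
      (ih fun c hc => h c (List.mem_cons_of_mem _ hc))

lemma spread {E : Multiset (Sym2 β)} {r s : ℕ} (h : IsResolution E r s)
    {f : ι → β → α} {J : List ι} (hf : ∀ j ∈ J, Function.Injective (f j))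
    (hJ : ∀ v, J.countP (fun j => v ∈ univ.image (f j)) = 1) :
    IsResolution (J.map fun j => E.map (Sym2.map (f j))).sum r s := by
  obtain ⟨Cs, Ss, rfl, rfl, hC, hS, rfl⟩ := h
  refine ⟨Cs.map (_root_.spread f J), Ss.map (_root_.spread f J), by simp, by simp, ?_, ?_, ?_⟩
  · simpa using fun L hL => isParallel_spread (hC L hL) hf hJ
  · simpa using fun L hL => isParallel_spread (hS L hL) hf hJ
  · simp only [List.map_map, Function.comp_def, classCyc_spread, classSt_spread]
    simp only [← Multiset.coe_mapAddMonoidHom, map_add, map_list_sum, List.map_map,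
      List.sum_map_add]
    rw [List.sum_map_sum_map Cs, List.sum_map_sum_map Ss]
    rfl

lemma map_equiv {E : Multiset (Sym2 β)} {r s : ℕ} (h : IsResolution E r s) (e : β ≃ α) :
    IsResolution (E.map (Sym2.map e)) r s := by
  simpa using h.spread (f := fun _ : Unit => e) (J := [()]) (by simpa using e.injective)
    (by simp [image_univ_equiv])

lemma sum_map_prodMk [Fintype ι] [DecidableEq ι] {E : Multiset (Sym2 β)} {r s : ℕ}
    (h : IsResolution E r s) :
    IsResolution (∑ i : ι, E.map (Sym2.map (Prod.mk i))) r s := by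
  rw [← Finset.sum_map_toList]
  refine h.spread (fun i _ => Prod.mk_right_injective i) fun v => ?_
  rw [List.countP_congr (q := (· == v.1)) (by aesop), ← List.count]
  exact List.count_eq_one_of_mem (nodup_toList _) (mem_toList.mpr (mem_univ _))

lemma two_nsmul_sum_k4Edges {r s : ℕ} (h : IsResolution (doubleK 4) r s) {L : List (Blk α)}
    (hL : IsParallel L) : IsResolution (2 • (L.map Blk.k4Edges).sum) r s := by
  have := h.spread (fun B hB => Blk.vertex_injective (hL.1 B hB))
    (fun v => by simpa [Blk.image_vertex] using hL.2 v)
  simpa [Blk.map_vertex_doubleK, two_nsmul, List.sum_map_add] using this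

end IsResolution

lemma count_map_prodMk {β ι : Type} [DecidableEq β] [DecidableEq ι] (m : Multiset (Sym2 β))
    (k i j : ι) (a b : β) :
    (m.map (Sym2.map (Prod.mk k))).count s((i, a), (j, b)) =
      if i = k ∧ j = k then m.count s(a, b) else 0 := by
  split_ifs with h
  · obtain ⟨rfl, rfl⟩ := h
    simpa using Multiset.count_map_eq_count' _ m (Sym2.map.injective (Prod.mk_right_injective _))
      s(a, b)
  · refine Multiset.count_eq_zero.mpr fun hmem => h ?_
    obtain ⟨w, -, hw⟩ := Multiset.mem_map.mp hmem
    induction w using Sym2.ind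
    aesop

section CompleteEdges

variable {α β ι : Type} [DecidableEq α] [Fintype α] [DecidableEq β] [Fintype β]
  [DecidableEq ι] [Fintype ι]

def completeEdges (α : Type) [DecidableEq α] [Fintype α] : Multiset (Sym2 α) :=
  (univ.filter fun e => ¬ e.IsDiag).val

lemma doubleK_eq_two_nsmul_completeEdges (v : ℕ) : doubleK v = 2 • completeEdges (Fin v) := rfl

lemma count_completeEdges (z : Sym2 α) :
    (completeEdges α).count z = if z.IsDiag then 0 else 1 := by
  rw [completeEdges, Multiset.count_eq_of_nodup (nodup _)]
  simp

lemma completeEdges_map_equiv (e : α ≃ β) :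
    (completeEdges α).map (Sym2.map e) = completeEdges β := by
  ext z
  rw [show z = Sym2.map e (Sym2.map e.symm z) by simp [Sym2.map_map],
    Multiset.count_map_eq_count' _ _ (Sym2.map.injective e.injective), count_completeEdges,
    count_completeEdges]
  simp [Sym2.isDiag_map e.injective]

lemma completeEdges_prod :
    completeEdges (ι × β) = (univ.filter fun e : Sym2 (ι × β) => ¬ (e.map Prod.fst).IsDiag).val
      + ∑ i, (completeEdges β).map (Sym2.map (Prod.mk i)) := by
  ext z
  induction z using Sym2.ind with
  | _ p q =>
    obtain ⟨i, a⟩ := p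
    obtain ⟨j, b⟩ := q
    rw [Multiset.count_add, Multiset.count_sum', count_completeEdges,
      Multiset.count_eq_of_nodup (nodup _)]
    simp only [count_map_prodMk, count_completeEdges]
    by_cases hij : i = j
    · subst hij
      simp [Sym2.mk_isDiag_iff]
    · simp [hij, Ne.symm hij, Sym2.mk_isDiag_iff]

lemma two_nsmul_completeEdges_fin_prod (u g : ℕ) :
    2 • completeEdges (Fin u × Fin g)
      = ∑ i, (doubleK g).map (Sym2.map (Prod.mk i)) + 2 • mpEdges u g := by
  rw [completeEdges_prod, smul_add, Finset.smul_sum, add_comm,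
    doubleK_eq_two_nsmul_completeEdges]
  simp only [Multiset.map_nsmul]
  rfl

end CompleteEdges

theorem stmt11_general (g u t r₂ s₂ : ℕ)
    (hGDD : IsRGDD u g t) (h4c : URD 4 3 0) (h4s : URD 4 0 4)
    (hg : URD g r₂ s₂) :
    ∀ x : ℕ, x ≤ t → URD (g * u) (r₂ + 3 * x) (s₂ + 4 * (t - x)) := by
  intro x hx
  obtain ⟨Cs, rfl, hpar, hsum⟩ := hGDD
  have hgroups : IsResolution (∑ i : Fin u, (doubleK g).map (Sym2.map (Prod.mk i))) r₂ s₂ :=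
    IsResolution.sum_map_prodMk hg
  have hcycles := IsResolution.list_sum (l := Cs.take x) fun L hL =>
    IsResolution.two_nsmul_sum_k4Edges h4c (hpar L (List.mem_of_mem_take hL))
  have hstars := IsResolution.list_sum (l := Cs.drop x) fun L hL =>
    IsResolution.two_nsmul_sum_k4Edges h4s (hpar L (List.mem_of_mem_drop hL))
  set e := (Equiv.prodComm (Fin u) (Fin g)).trans finProdFinEquiv
  have hedges : (∑ i : Fin u, (doubleK g).map (Sym2.map (Prod.mk i))
      + ((Cs.take x).map fun L => 2 • (L.map Blk.k4Edges).sum).sum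
      + ((Cs.drop x).map fun L => 2 • (L.map Blk.k4Edges).sum).sum).map (Sym2.map e)
      = doubleK (g * u) := by
    have hblocks : (Cs.map fun L => 2 • (L.map Blk.k4Edges).sum).sum = 2 • mpEdges u g := by
      simp [two_nsmul, List.sum_map_add, hsum]
    rw [add_assoc, ← List.sum_append, ← List.map_append, List.take_append_drop, hblocks,
      ← two_nsmul_completeEdges_fin_prod, Multiset.map_nsmul, completeEdges_map_equiv,
      doubleK_eq_two_nsmul_completeEdges]
  have := ((hgroups.add hcycles).add hstars).map_equiv e
  rwa [hedges, List.length_take_of_le hx, List.length_drop, mul_zero, mul_zero, add_zero,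
    add_zero, mul_comm x, mul_comm _ 4] at this

/-- from a 4-RGDD of type `g^u` with `t = g(u-1)/3` classes,
fillings of `2K_4` with 3 cycle classes or 4 star classes, and a URD of `2K_g`
with parameters `(r₂, s₂)`, we get a URD of `2K_{gu}` with parameters
`(r₂ + 3x, s₂ + 4(t-x))` for every `0 ≤ x ≤ t`. -/
theorem stmt11 (g u t r₂ s₂ : ℕ) (ht : 3 * t = g * (u - 1))
    (hGDD : IsRGDD u g t) (h4c : URD 4 3 0) (h4s : URD 4 0 4)
    (hg : URD g r₂ s₂) :
    ∀ x : ℕ, x ≤ t → URD (g * u) (r₂ + 3 * x) (s₂ + 4 * (t - x)) :=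
  stmt11_general g u t r₂ s₂ hGDD h4c h4s hg
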